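/- Suppose an equation z_{tt} = A(z,z_x,z_t) z_{xx} + B(z,z_x,z_t) z_{xt} + C(z,z_x,z_t) is equivalent (as an identity in the jet variables z, z_x, z_t, z_{xx}, z_{xt} and higher) to the system of three structure equations for 1-forms ω_i = f_{i1} dx + f_{i2} dt with δ = ±1, where the f_{ij} are differentiable functions of (z, z_t, z_x, z_{xx}, …, z_{x…x}) satisfying f21,_{z_t} = f31,_{z_t} = 0 and f11 f22 − f12 f21 ≠ 0. Then: (1) all f_{ij} depend only on (z, z_x, z_t); (2) f11,_{z_t} ≠ 0; and (3) there exist differentiable functions φ, φ̃, ψ21, ψ22, ψ31, ψ32 of z alone such that f21 = φ z_x + ψ21, f22 = φ z_t + ψ22, f31 = φ̃ z_x + ψ31, f32 = φ̃ z_t + ψ32. -/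

import Mathlib

/-- Partial derivative of a jet function with respect to `z`. -/
noncomputable def Pz {m : ℕ} (g : ℝ → ℝ → (Fin (m + 1) → ℝ) → ℝ)
    (z zt : ℝ) (Z : Fin (m + 1) → ℝ) : ℝ :=
  deriv (fun s => g s zt Z) z

/-- Partial derivative of a jet function with respect to `z_t`. -/
noncomputable def Pzt {m : ℕ} (g : ℝ → ℝ → (Fin (m + 1) → ℝ) → ℝ)
    (z zt : ℝ) (Z : Fin (m + 1) → ℝ) : ℝ :=
  deriv (fun s => g z s Z) zt

/-- Partial derivative of a jet function with respect to `z_{k+1} = ∂_x^{k+1} z`. -/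
noncomputable def Pk {m : ℕ} (g : ℝ → ℝ → (Fin (m + 1) → ℝ) → ℝ)
    (k : Fin (m + 1)) (z zt : ℝ) (Z : Fin (m + 1) → ℝ) : ℝ :=
  deriv (fun s => g z zt (Function.update Z k s)) (Z k)

/-- Shift of the vector of `x`-derivatives: `(Znext Z w) k = z_{k+2}`, with top entry `w`. -/
def Znext {m : ℕ} (Z : Fin (m + 1) → ℝ) (w : ℝ) : Fin (m + 1) → ℝ :=
  fun k => if h : (k : ℕ) + 1 < m + 1 then Z ⟨(k : ℕ) + 1, h⟩ else w

/-- Total `x`-derivative on the jet space: here `Z k = z_{k+1}`, `W k = z_{t,k+1}`,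
and `w = z_{m+2}`. -/
noncomputable def DxT {m : ℕ} (g : ℝ → ℝ → (Fin (m + 1) → ℝ) → ℝ)
    (z zt w : ℝ) (Z W : Fin (m + 1) → ℝ) : ℝ :=
  Pz g z zt Z * Z 0 + Pzt g z zt Z * W 0 + ∑ k, Pk g k z zt Z * Znext Z w k

/-- Total `t`-derivative on the jet space, with `ztt` the value substituted for `z_{tt}`. -/
noncomputable def DtT {m : ℕ} (g : ℝ → ℝ → (Fin (m + 1) → ℝ) → ℝ)
    (z zt ztt : ℝ) (Z W : Fin (m + 1) → ℝ) : ℝ :=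
  Pz g z zt Z * zt + Pzt g z zt Z * ztt + ∑ k, Pk g k z zt Z * W k

section Aux

variable {m : ℕ} {g : ℝ → ℝ → (Fin (m + 1) → ℝ) → ℝ}

/-- `g` is invariant under all jet coordinates with index `≥ j`. -/
def IndAbove {m : ℕ} (g : ℝ → ℝ → (Fin (m + 1) → ℝ) → ℝ) (j : ℕ) : Prop :=
  ∀ k : Fin (m + 1), j ≤ (k : ℕ) → ∀ (z zt : ℝ) (Z : Fin (m + 1) → ℝ) (s : ℝ),
    g z zt (Function.update Z k s) = g z zt Z

lemma upd_diff (Z : Fin (m + 1) → ℝ) (k : Fin (m + 1)) :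
    Differentiable ℝ (fun s : ℝ => Function.update Z k s) := by
  rw [differentiable_pi]
  intro i
  by_cases h : i = k
  · subst h; simp only [Function.update_self]; exact differentiable_id
  · simp only [Function.update_of_ne h]; exact differentiable_const _

lemma sect_zt_diff (hg : ContDiff ℝ (⊤ : ℕ∞) fun p : ℝ × ℝ × (Fin (m + 1) → ℝ) => g p.1 p.2.1 p.2.2)
    (z : ℝ) (Z : Fin (m + 1) → ℝ) : Differentiable ℝ (fun s => g z s Z) :=
  (hg.differentiable (by simp)).comp
    ((differentiable_const z).prodMk (differentiable_id.prodMk (differentiable_const Z)))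

lemma sect_k_diff (hg : ContDiff ℝ (⊤ : ℕ∞) fun p : ℝ × ℝ × (Fin (m + 1) → ℝ) => g p.1 p.2.1 p.2.2)
    (z zt : ℝ) (Z : Fin (m + 1) → ℝ) (k : Fin (m + 1)) :
    Differentiable ℝ (fun s => g z zt (Function.update Z k s)) :=
  (hg.differentiable (by simp)).comp
    ((differentiable_const z).prodMk ((differentiable_const zt).prodMk (upd_diff Z k)))

lemma deriv_sect_k (z zt : ℝ) (Z : Fin (m + 1) → ℝ) (k : Fin (m + 1)) (s : ℝ) :
    deriv (fun s' => g z zt (Function.update Z k s')) s = Pk g k z zt (Function.update Z k s) := by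
  simp [Pk, Function.update_idem]

lemma indep_coord (hg : ContDiff ℝ (⊤ : ℕ∞) fun p : ℝ × ℝ × (Fin (m + 1) → ℝ) => g p.1 p.2.1 p.2.2)
    (k : Fin (m + 1)) (h : ∀ z zt Z, Pk g k z zt Z = 0) :
    ∀ (z zt : ℝ) (Z : Fin (m + 1) → ℝ) (s : ℝ),
      g z zt (Function.update Z k s) = g z zt Z := by
  intro z zt Z s
  have h1 : ∀ s', deriv (fun s'' => g z zt (Function.update Z k s'')) s' = 0 := by
    intro s'; rw [deriv_sect_k]; exact h _ _ _
  have := is_const_of_deriv_eq_zero (sect_k_diff hg z zt Z k) h1 s (Z k)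
  simpa using this

lemma affine_of_deriv_const {h : ℝ → ℝ} {c : ℝ} (hd : Differentiable ℝ h)
    (hc : ∀ s, deriv h s = c) : ∀ s, h s = h 0 + c * s := by
  intro s
  have hd2 : Differentiable ℝ (fun s => h s - c * s) :=
    hd.sub ((differentiable_const c).mul differentiable_id)
  have h1 : ∀ s', deriv (fun s => h s - c * s) s' = 0 := by
    intro s'
    have hh := ((hd s').hasDerivAt.sub ((hasDerivAt_id s').const_mul c))
    have e : deriv (fun s => h s - c * s) s' = deriv h s' - c * 1 := hh.deriv
    rw [e, hc]; ring
  have := is_const_of_deriv_eq_zero hd2 h1 s 0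
  simp at this
  linarith

lemma eq_of_agree0 (inv : IndAbove g 1) :
    ∀ (z zt : ℝ) (Z Z' : Fin (m + 1) → ℝ), Z 0 = Z' 0 → g z zt Z = g z zt Z' := by
  intro z zt
  suffices H : ∀ S : Finset (Fin (m + 1)), ∀ Z Z' : Fin (m + 1) → ℝ,
      (∀ i ∈ S, 1 ≤ (i : ℕ)) → (∀ i, i ∉ S → Z i = Z' i) → g z zt Z = g z zt Z' by
    intro Z Z' h0
    refine H (Finset.univ.erase 0) Z Z' ?_ ?_
    · intro i hi
      have hne := Finset.ne_of_mem_erase hi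
      exact Nat.one_le_iff_ne_zero.mpr (fun h => hne (Fin.ext (by simp [h])))
    · intro i hi
      have : i = 0 := by
        by_contra hne
        exact hi (Finset.mem_erase.mpr ⟨hne, Finset.mem_univ i⟩)
      rw [this, h0]
  intro S
  induction S using Finset.induction_on with
  | empty =>
    intro Z Z' _ hagree
    congr 1
    funext i
    exact hagree i (by simp)
  | @insert a S ha IH =>
    intro Z Z' hS hagree
    have ha1 : 1 ≤ (a : ℕ) := hS a (Finset.mem_insert_self a S)
    calc g z zt Z = g z zt (Function.update Z a (Z' a)) :=
          (inv a ha1 z zt Z (Z' a)).symm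
      _ = g z zt Z' := by
          refine IH (Function.update Z a (Z' a)) Z' ?_ ?_
          · intro i hi; exact hS i (Finset.mem_insert_of_mem hi)
          · intro i hi
            by_cases h : i = a
            · subst h; simp
            · rw [Function.update_of_ne h]
              exact hagree i (by simp [hi, h])

lemma znext_split (Z : Fin (m + 1) → ℝ) (w : ℝ) (k : Fin (m + 1)) :
    Znext Z w k = Znext Z 0 k + (if k = Fin.last m then w else 0) := by
  unfold Znext
  by_cases h : (k : ℕ) + 1 < m + 1
  · have hk : k ≠ Fin.last m := by
      intro e
      rw [e] at h
      simp [Fin.last] at h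
    simp [h, hk]
  · have hk : k = Fin.last m := Fin.ext (by have := k.isLt; simp [Fin.last]; omega)
    simp [h, hk]

lemma sum_mul_znext (c : Fin (m + 1) → ℝ) (Z : Fin (m + 1) → ℝ) (w : ℝ) :
    (∑ k, c k * Znext Z w k) = (∑ k, c k * Znext Z 0 k) + c (Fin.last m) * w := by
  have h : ∀ k : Fin (m + 1),
      c k * Znext Z w k = c k * Znext Z 0 k + (if k = Fin.last m then c k * w else 0) := by
    intro k
    rw [znext_split Z w k]
    by_cases h : k = Fin.last m <;> simp [h] <;> ring
  rw [Finset.sum_congr rfl (fun k _ => h k), Finset.sum_add_distrib,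
    Finset.sum_ite_eq' Finset.univ]
  simp

lemma DxT_split (g : ℝ → ℝ → (Fin (m + 1) → ℝ) → ℝ) (z zt w : ℝ) (Z W : Fin (m + 1) → ℝ) :
    DxT g z zt w Z W = Pz g z zt Z * Z 0 + Pzt g z zt Z * W 0
      + (∑ k, Pk g k z zt Z * Znext Z 0 k) + Pk g (Fin.last m) z zt Z * w := by
  unfold DxT
  rw [sum_mul_znext]
  ring

lemma Pk_zero_of_inv {k : Fin (m + 1)}
    (inv : ∀ z zt Z s, g z zt (Function.update Z k s) = g z zt Z)
    (z zt : ℝ) (Z : Fin (m + 1) → ℝ) : Pk g k z zt Z = 0 := by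
  unfold Pk
  have h : (fun s => g z zt (Function.update Z k s)) = fun _ => g z zt Z :=
    funext fun s => inv z zt Z s
  rw [h]
  exact deriv_const _ _

lemma Pz_congr {Z Z' : Fin (m + 1) → ℝ} (h : ∀ z zt, g z zt Z = g z zt Z') (z zt : ℝ) :
    Pz g z zt Z = Pz g z zt Z' := by
  unfold Pz; congr 1; funext s; exact h s zt

lemma Pzt_congr {Z Z' : Fin (m + 1) → ℝ} (h : ∀ z zt, g z zt Z = g z zt Z') (z zt : ℝ) :
    Pzt g z zt Z = Pzt g z zt Z' := by
  unfold Pzt; congr 1; funext s; exact h z s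

lemma Pk_congr {k : Fin (m + 1)} {Z Z' : Fin (m + 1) → ℝ} (hk : Z k = Z' k)
    (h : ∀ z zt s, g z zt (Function.update Z k s) = g z zt (Function.update Z' k s))
    (z zt : ℝ) : Pk g k z zt Z = Pk g k z zt Z' := by
  unfold Pk
  rw [hk]
  congr 1
  funext s
  exact h z zt s

lemma Pk_update_congr {a k : Fin (m + 1)} (hne : k ≠ a)
    (inv : ∀ z zt Z s, g z zt (Function.update Z a s) = g z zt Z)
    (z zt : ℝ) (Z : Fin (m + 1) → ℝ) (v : ℝ) :
    Pk g k z zt (Function.update Z a v) = Pk g k z zt Z := by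
  refine Pk_congr (Function.update_of_ne hne v Z) ?_ z zt
  intro z zt s
  rw [Function.update_comm hne.symm v s Z]
  exact inv z zt _ v

lemma sum_mul_single (c : Fin (m + 1) → ℝ) (j : Fin (m + 1)) :
    ∑ k, c k * (Pi.single j 1 : Fin (m + 1) → ℝ) k = c j := by
  simp [Pi.single_apply, mul_ite, Finset.sum_ite_eq']

end Aux

/-- Theorem 4.1 (structural part): if `z_{tt} = A z_{xx} + B z_{xt} + C` is equivalent,
as an identity on the jet space, to the structure equations for 1-forms with coefficients
`f_{ij}(z, z_t, z_x, …, ∂_x^{m+1} z)` satisfying `f21,_{z_t} = f31,_{z_t} = 0` and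
`f11 f22 − f12 f21 ≠ 0`, then all `f_{ij}` depend only on `(z, z_x, z_t)`,
`f11,_{z_t} ≠ 0`, and `f21, f22, f31, f32` are affine in `(z_x, z_t)` with
`z`-dependent coefficients. -/
theorem structure_of_fij (m : ℕ) (δ : ℝ) (hδ : δ = 1 ∨ δ = -1)
    (A B C : ℝ → ℝ → ℝ → ℝ)
    (hA : ContDiff ℝ (⊤ : ℕ∞) fun p : ℝ × ℝ × ℝ => A p.1 p.2.1 p.2.2)
    (hB : ContDiff ℝ (⊤ : ℕ∞) fun p : ℝ × ℝ × ℝ => B p.1 p.2.1 p.2.2)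
    (hC : ContDiff ℝ (⊤ : ℕ∞) fun p : ℝ × ℝ × ℝ => C p.1 p.2.1 p.2.2)
    (hABC : ∀ a b c : ℝ, A a b c ^ 2 + B a b c ^ 2 + C a b c ^ 2 ≠ 0)
    (f11 f12 f21 f22 f31 f32 : ℝ → ℝ → (Fin (m + 1) → ℝ) → ℝ)
    (hf11 : ContDiff ℝ (⊤ : ℕ∞) fun p : ℝ × ℝ × (Fin (m + 1) → ℝ) => f11 p.1 p.2.1 p.2.2)
    (hf12 : ContDiff ℝ (⊤ : ℕ∞) fun p : ℝ × ℝ × (Fin (m + 1) → ℝ) => f12 p.1 p.2.1 p.2.2)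
    (hf21 : ContDiff ℝ (⊤ : ℕ∞) fun p : ℝ × ℝ × (Fin (m + 1) → ℝ) => f21 p.1 p.2.1 p.2.2)
    (hf22 : ContDiff ℝ (⊤ : ℕ∞) fun p : ℝ × ℝ × (Fin (m + 1) → ℝ) => f22 p.1 p.2.1 p.2.2)
    (hf31 : ContDiff ℝ (⊤ : ℕ∞) fun p : ℝ × ℝ × (Fin (m + 1) → ℝ) => f31 p.1 p.2.1 p.2.2)
    (hf32 : ContDiff ℝ (⊤ : ℕ∞) fun p : ℝ × ℝ × (Fin (m + 1) → ℝ) => f32 p.1 p.2.1 p.2.2)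
    -- f21 and f31 do not depend on z_t:
    (h21zt : ∀ (z zt zt' : ℝ) (Z : Fin (m + 1) → ℝ), f21 z zt Z = f21 z zt' Z)
    (h31zt : ∀ (z zt zt' : ℝ) (Z : Fin (m + 1) → ℝ), f31 z zt Z = f31 z zt' Z)
    -- nondegeneracy ω₁ ∧ ω₂ ≠ 0:
    (hnd : ∀ (z zt : ℝ) (Z : Fin (m + 1) → ℝ),
      f11 z zt Z * f22 z zt Z - f12 z zt Z * f21 z zt Z ≠ 0)
    -- the equation is equivalent to the structure equations, identically in the jet variables:
    (hequiv : ∀ (z zt w ztt : ℝ) (Z W : Fin (m + 1) → ℝ),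
      (DxT f12 z zt w Z W - DtT f11 z zt ztt Z W
          = f31 z zt Z * f22 z zt Z - f32 z zt Z * f21 z zt Z ∧
        DxT f22 z zt w Z W - DtT f21 z zt ztt Z W
          = f11 z zt Z * f32 z zt Z - f12 z zt Z * f31 z zt Z ∧
        DxT f32 z zt w Z W - DtT f31 z zt ztt Z W
          = δ * (f11 z zt Z * f22 z zt Z - f12 z zt Z * f21 z zt Z))
        ↔ ztt = A z (Z 0) zt * Znext Z w 0 + B z (Z 0) zt * W 0 + C z (Z 0) zt) :
    -- (1) all f_ij depend only on (z, z_x, z_t):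
    ((∃ G : ℝ → ℝ → ℝ → ℝ, ∀ z zt Z, f11 z zt Z = G z (Z 0) zt) ∧
     (∃ G : ℝ → ℝ → ℝ → ℝ, ∀ z zt Z, f12 z zt Z = G z (Z 0) zt) ∧
     (∃ G : ℝ → ℝ → ℝ → ℝ, ∀ z zt Z, f21 z zt Z = G z (Z 0) zt) ∧
     (∃ G : ℝ → ℝ → ℝ → ℝ, ∀ z zt Z, f22 z zt Z = G z (Z 0) zt) ∧
     (∃ G : ℝ → ℝ → ℝ → ℝ, ∀ z zt Z, f31 z zt Z = G z (Z 0) zt) ∧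
     (∃ G : ℝ → ℝ → ℝ → ℝ, ∀ z zt Z, f32 z zt Z = G z (Z 0) zt)) ∧
    -- (2) f11,_{z_t} ≠ 0:
    (∀ (z zt : ℝ) (Z : Fin (m + 1) → ℝ), Pzt f11 z zt Z ≠ 0) ∧
    -- (3) affine structure of f21, f22, f31, f32:
    (∃ φ φt ψ21 ψ22 ψ31 ψ32 : ℝ → ℝ,
      Differentiable ℝ φ ∧ Differentiable ℝ φt ∧
      Differentiable ℝ ψ21 ∧ Differentiable ℝ ψ22 ∧
      Differentiable ℝ ψ31 ∧ Differentiable ℝ ψ32 ∧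
      ∀ (z zt : ℝ) (Z : Fin (m + 1) → ℝ),
        f21 z zt Z = φ z * Z 0 + ψ21 z ∧
        f22 z zt Z = φ z * zt + ψ22 z ∧
        f31 z zt Z = φt z * Z 0 + ψ31 z ∧
        f32 z zt Z = φt z * zt + ψ32 z) := by
  classical
  -- f21, f31 do not depend on z_t, so their Pzt vanishes
  have hPzt21 : ∀ z zt Z, Pzt f21 z zt Z = 0 := by
    intro z zt Z
    have h : (fun s => f21 z s Z) = fun _ => f21 z 0 Z := funext fun s => h21zt z s 0 Z
    unfold Pzt; rw [h]; exact deriv_const _ _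
  have hPzt31 : ∀ z zt Z, Pzt f31 z zt Z = 0 := by
    intro z zt Z
    have h : (fun s => f31 z s Z) = fun _ => f31 z 0 Z := funext fun s => h31zt z s 0 Z
    unfold Pzt; rw [h]; exact deriv_const _ _
  -- the structure equations hold at the value of z_tt prescribed by the PDE
  have master := fun (z zt w : ℝ) (Z W : Fin (m+1) → ℝ) =>
    (hequiv z zt w (A z (Z 0) zt * Znext Z w 0 + B z (Z 0) zt * W 0 + C z (Z 0) zt) Z W).mpr rfl
  -- expanded forms of the three structure equations
  have E1' : ∀ (z zt w : ℝ) (Z W : Fin (m+1) → ℝ),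
      Pz f12 z zt Z * Z 0 + Pzt f12 z zt Z * W 0 + (∑ k, Pk f12 k z zt Z * Znext Z 0 k)
        + Pk f12 (Fin.last m) z zt Z * w
        - (Pz f11 z zt Z * zt
          + Pzt f11 z zt Z * (A z (Z 0) zt * (Znext Z 0 0
              + (if (0 : Fin (m+1)) = Fin.last m then w else 0))
              + B z (Z 0) zt * W 0 + C z (Z 0) zt)
          + ∑ k, Pk f11 k z zt Z * W k)
        = f31 z zt Z * f22 z zt Z - f32 z zt Z * f21 z zt Z := by
    intro z zt w Z W
    have h := (master z zt w Z W).1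
    rw [DxT_split] at h
    unfold DtT at h
    rw [znext_split Z w 0] at h
    linear_combination h
  have E2' : ∀ (z zt w : ℝ) (Z W : Fin (m+1) → ℝ),
      Pz f22 z zt Z * Z 0 + Pzt f22 z zt Z * W 0 + (∑ k, Pk f22 k z zt Z * Znext Z 0 k)
        + Pk f22 (Fin.last m) z zt Z * w
        - (Pz f21 z zt Z * zt + ∑ k, Pk f21 k z zt Z * W k)
        = f11 z zt Z * f32 z zt Z - f12 z zt Z * f31 z zt Z := by
    intro z zt w Z W
    have h := (master z zt w Z W).2.1
    rw [DxT_split] at h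
    unfold DtT at h
    rw [hPzt21 z zt Z] at h
    linear_combination h
  have E3' : ∀ (z zt w : ℝ) (Z W : Fin (m+1) → ℝ),
      Pz f32 z zt Z * Z 0 + Pzt f32 z zt Z * W 0 + (∑ k, Pk f32 k z zt Z * Znext Z 0 k)
        + Pk f32 (Fin.last m) z zt Z * w
        - (Pz f31 z zt Z * zt + ∑ k, Pk f31 k z zt Z * W k)
        = δ * (f11 z zt Z * f22 z zt Z - f12 z zt Z * f21 z zt Z) := by
    intro z zt w Z W
    have h := (master z zt w Z W).2.2
    rw [DxT_split] at h
    unfold DtT at h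
    rw [hPzt31 z zt Z] at h
    linear_combination h
  -- coefficient facts from equation 2
  have C2a : ∀ z zt Z, Pk f22 (Fin.last m) z zt Z = 0 := by
    intro z zt Z
    have h1 := E2' z zt 1 Z 0
    have h0 := E2' z zt 0 Z 0
    simp only [Pi.zero_apply, mul_zero, mul_one, Finset.sum_const_zero, add_zero] at h1 h0
    linarith
  have C2b : ∀ z zt Z, Pzt f22 z zt Z = Pk f21 0 z zt Z := by
    intro z zt Z
    have h1 := E2' z zt 0 Z (Pi.single 0 1)
    have h0 := E2' z zt 0 Z 0
    rw [sum_mul_single (fun k => Pk f21 k z zt Z) 0] at h1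
    simp only [Pi.zero_apply, Pi.single_eq_same, mul_zero, mul_one,
      Finset.sum_const_zero, add_zero] at h1 h0
    linarith
  have C2c : ∀ j : Fin (m+1), j ≠ 0 → ∀ z zt Z, Pk f21 j z zt Z = 0 := by
    intro j hj z zt Z
    have h1 := E2' z zt 0 Z (Pi.single j 1)
    have h0 := E2' z zt 0 Z 0
    rw [sum_mul_single (fun k => Pk f21 k z zt Z) j] at h1
    rw [Pi.single_eq_of_ne (Ne.symm hj)] at h1
    simp only [Pi.zero_apply, mul_zero, mul_one, Finset.sum_const_zero, add_zero] at h1 h0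
    linarith
  -- coefficient facts from equation 3
  have C3a : ∀ z zt Z, Pk f32 (Fin.last m) z zt Z = 0 := by
    intro z zt Z
    have h1 := E3' z zt 1 Z 0
    have h0 := E3' z zt 0 Z 0
    simp only [Pi.zero_apply, mul_zero, mul_one, Finset.sum_const_zero, add_zero] at h1 h0
    linarith
  have C3b : ∀ z zt Z, Pzt f32 z zt Z = Pk f31 0 z zt Z := by
    intro z zt Z
    have h1 := E3' z zt 0 Z (Pi.single 0 1)
    have h0 := E3' z zt 0 Z 0
    rw [sum_mul_single (fun k => Pk f31 k z zt Z) 0] at h1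
    simp only [Pi.zero_apply, Pi.single_eq_same, mul_zero, mul_one,
      Finset.sum_const_zero, add_zero] at h1 h0
    linarith
  have C3c : ∀ j : Fin (m+1), j ≠ 0 → ∀ z zt Z, Pk f31 j z zt Z = 0 := by
    intro j hj z zt Z
    have h1 := E3' z zt 0 Z (Pi.single j 1)
    have h0 := E3' z zt 0 Z 0
    rw [sum_mul_single (fun k => Pk f31 k z zt Z) j] at h1
    rw [Pi.single_eq_of_ne (Ne.symm hj)] at h1
    simp only [Pi.zero_apply, mul_zero, mul_one, Finset.sum_const_zero, add_zero] at h1 h0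
    linarith
  -- coefficient facts from equation 1
  have C1a : ∀ z zt Z, Pk f12 (Fin.last m) z zt Z
      = Pzt f11 z zt Z * (A z (Z 0) zt * (if (0 : Fin (m+1)) = Fin.last m then 1 else 0)) := by
    intro z zt Z
    have h1 := E1' z zt 1 Z 0
    have h0 := E1' z zt 0 Z 0
    simp only [Pi.zero_apply, mul_zero, mul_one, Finset.sum_const_zero, add_zero,
      ite_self] at h1 h0
    linear_combination h1 - h0
  have C1b : ∀ z zt Z, Pzt f12 z zt Z
      = Pk f11 0 z zt Z + Pzt f11 z zt Z * B z (Z 0) zt := by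
    intro z zt Z
    have h1 := E1' z zt 0 Z (Pi.single 0 1)
    have h0 := E1' z zt 0 Z 0
    rw [sum_mul_single (fun k => Pk f11 k z zt Z) 0] at h1
    simp only [Pi.zero_apply, Pi.single_eq_same, mul_zero, mul_one,
      Finset.sum_const_zero, add_zero, ite_self] at h1 h0
    linear_combination h1 - h0
  have C1c : ∀ j : Fin (m+1), j ≠ 0 → ∀ z zt Z, Pk f11 j z zt Z = 0 := by
    intro j hj z zt Z
    have h1 := E1' z zt 0 Z (Pi.single j 1)
    have h0 := E1' z zt 0 Z 0
    rw [sum_mul_single (fun k => Pk f11 k z zt Z) j] at h1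
    rw [Pi.single_eq_of_ne (Ne.symm hj)] at h1
    simp only [Pi.zero_apply, mul_zero, mul_one, Finset.sum_const_zero, add_zero,
      ite_self] at h1 h0
    linear_combination h0 - h1
  -- base identities (w = 0, W = 0)
  have E1₀ : ∀ (z zt : ℝ) (Z : Fin (m+1) → ℝ),
      Pz f12 z zt Z * Z 0 + (∑ k, Pk f12 k z zt Z * Znext Z 0 k)
        - (Pz f11 z zt Z * zt
          + Pzt f11 z zt Z * (A z (Z 0) zt * Znext Z 0 0 + C z (Z 0) zt))
        = f31 z zt Z * f22 z zt Z - f32 z zt Z * f21 z zt Z := by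
    intro z zt Z
    have h := E1' z zt 0 Z 0
    simp only [Pi.zero_apply, mul_zero, Finset.sum_const_zero, add_zero, ite_self] at h
    linear_combination h
  have E2₀ : ∀ (z zt : ℝ) (Z : Fin (m+1) → ℝ),
      Pz f22 z zt Z * Z 0 + (∑ k, Pk f22 k z zt Z * Znext Z 0 k)
        - Pz f21 z zt Z * zt
        = f11 z zt Z * f32 z zt Z - f12 z zt Z * f31 z zt Z := by
    intro z zt Z
    have h := E2' z zt 0 Z 0
    simp only [Pi.zero_apply, mul_zero, Finset.sum_const_zero, add_zero] at h
    linear_combination h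
  have E3₀ : ∀ (z zt : ℝ) (Z : Fin (m+1) → ℝ),
      Pz f32 z zt Z * Z 0 + (∑ k, Pk f32 k z zt Z * Znext Z 0 k)
        - Pz f31 z zt Z * zt
        = δ * (f11 z zt Z * f22 z zt Z - f12 z zt Z * f21 z zt Z) := by
    intro z zt Z
    have h := E3' z zt 0 Z 0
    simp only [Pi.zero_apply, mul_zero, Finset.sum_const_zero, add_zero] at h
    linear_combination h
  -- Part (2): f11 genuinely depends on z_t
  have part2 : ∀ (z zt : ℝ) (Z : Fin (m+1) → ℝ), Pzt f11 z zt Z ≠ 0 := by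
    intro z zt Z h0
    obtain ⟨e1, e2, e3⟩ := master z zt 0 Z 0
    set V := A z (Z 0) zt * Znext Z 0 0 + B z (Z 0) zt * (0 : Fin (m+1) → ℝ) 0
      + C z (Z 0) zt with hV
    have key1 : DtT f11 z zt (V + 1) Z 0 = DtT f11 z zt V Z 0 := by
      unfold DtT; rw [h0]; ring
    have key2 : ∀ (gg : ℝ → ℝ → (Fin (m+1) → ℝ) → ℝ),
        (∀ z zt Z, Pzt gg z zt Z = 0) → DtT gg z zt (V+1) Z 0 = DtT gg z zt V Z 0 := by
      intro gg hz; unfold DtT; rw [hz]; ring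
    have habs := (hequiv z zt 0 (V + 1) Z 0).mp
      ⟨by rw [key1]; exact e1, by rw [key2 f21 hPzt21]; exact e2,
        by rw [key2 f31 hPzt31]; exact e3⟩
    rw [← hV] at habs
    linarith
  -- invariance of f11, f21, f31 under all coordinates ≥ 1
  have ind11 : IndAbove f11 1 := by
    intro k hk
    exact indep_coord hf11 k (C1c k (by intro e; subst e; simp at hk))
  have ind21 : IndAbove f21 1 := by
    intro k hk
    exact indep_coord hf21 k (C2c k (by intro e; subst e; simp at hk))
  have ind31 : IndAbove f31 1 := by
    intro k hk
    exact indep_coord hf31 k (C3c k (by intro e; subst e; simp at hk))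
  -- one step of the downward induction: coefficient of z_{j+2} in eq. 2
  have step22 : ∀ j : ℕ, j + 1 ≤ m →
      IndAbove f12 (j+1) → IndAbove f22 (j+1) → IndAbove f32 (j+1) →
      ∀ (z zt : ℝ) (Z : Fin (m+1) → ℝ) (hjm1 : j < m + 1), Pk f22 ⟨j, hjm1⟩ z zt Z = 0 := by
    intro j hj I12 I22 I32 z zt Z hjm1
    have hj1m : j + 1 < m + 1 := by omega
    set jF : Fin (m+1) := ⟨j, hjm1⟩ with hjF
    set j1F : Fin (m+1) := ⟨j+1, hj1m⟩ with hj1F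
    have inv22 : ∀ z zt Z s, f22 z zt (Function.update Z j1F s) = f22 z zt Z :=
      fun a b Y s => I22 j1F (le_refl _) a b Y s
    have inv12 : ∀ z zt Z s, f12 z zt (Function.update Z j1F s) = f12 z zt Z :=
      fun a b Y s => I12 j1F (le_refl _) a b Y s
    have inv32 : ∀ z zt Z s, f32 z zt (Function.update Z j1F s) = f32 z zt Z :=
      fun a b Y s => I32 j1F (le_refl _) a b Y s
    have inv11 : ∀ z zt Z s, f11 z zt (Function.update Z j1F s) = f11 z zt Z :=
      fun a b Y s => ind11 j1F (Nat.le_add_left 1 j) a b Y s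
    have inv21 : ∀ z zt Z s, f21 z zt (Function.update Z j1F s) = f21 z zt Z :=
      fun a b Y s => ind21 j1F (Nat.le_add_left 1 j) a b Y s
    have inv31 : ∀ z zt Z s, f31 z zt (Function.update Z j1F s) = f31 z zt Z :=
      fun a b Y s => ind31 j1F (Nat.le_add_left 1 j) a b Y s
    set Z' := Function.update Z j1F (Z j1F + 1) with hZ'
    have e1 := E2₀ z zt Z
    have e2 := E2₀ z zt Z'
    have hZ'0 : Z' 0 = Z 0 :=
      Function.update_of_ne (by rw [hj1F]; exact Fin.ne_of_val_ne (by simp)) _ _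
    have t1 : Pz f22 z zt Z' = Pz f22 z zt Z := Pz_congr (fun a b => inv22 a b Z _) z zt
    have t2 : Pz f21 z zt Z' = Pz f21 z zt Z := Pz_congr (fun a b => inv21 a b Z _) z zt
    have t3 : f11 z zt Z' = f11 z zt Z := inv11 z zt Z _
    have t4 : f32 z zt Z' = f32 z zt Z := inv32 z zt Z _
    have t5 : f12 z zt Z' = f12 z zt Z := inv12 z zt Z _
    have t6 : f31 z zt Z' = f31 z zt Z := inv31 z zt Z _
    have tsum : (∑ k, Pk f22 k z zt Z' * Znext Z' 0 k)
        = (∑ k, Pk f22 k z zt Z * Znext Z 0 k) + Pk f22 jF z zt Z := by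
      have hterm : ∀ k : Fin (m+1), Pk f22 k z zt Z' * Znext Z' 0 k
          = Pk f22 k z zt Z * Znext Z 0 k + (if k = jF then Pk f22 k z zt Z else 0) := by
        intro k
        by_cases hk1 : k = j1F
        · subst hk1
          rw [Pk_zero_of_inv inv22 z zt Z', Pk_zero_of_inv inv22 z zt Z]
          have hne : j1F ≠ jF := by rw [hjF, hj1F]; exact Fin.ne_of_val_ne (by simp)
          simp [hne]
        · rw [Pk_update_congr hk1 inv22 z zt Z _]
          by_cases hk2 : k = jF
          · subst hk2
            have hlt : (jF : ℕ) + 1 < m + 1 := hj1m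
            have q1 : Znext Z' 0 jF = Z' ⟨(jF:ℕ)+1, hlt⟩ := dif_pos hlt
            have q2 : Znext Z 0 jF = Z ⟨(jF:ℕ)+1, hlt⟩ := dif_pos hlt
            have q3 : Z' ⟨(jF:ℕ)+1, hlt⟩ = Z j1F + 1 := Function.update_self _ _ _
            have q4 : Z ⟨(jF:ℕ)+1, hlt⟩ = Z j1F := rfl
            rw [q1, q3, q2, q4, if_pos rfl]
            ring
          · have hkv : (k:ℕ) ≠ j := fun h => hk2 (by rw [hjF]; exact Fin.ext h)
            have hzn : Znext Z' 0 k = Znext Z 0 k := by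
              unfold Znext
              by_cases hlt : (k:ℕ) + 1 < m + 1
              · simp only [dif_pos hlt]
                refine Function.update_of_ne ?_ _ _
                rw [hj1F]
                exact Fin.ne_of_val_ne (by simpa using hkv)
              · simp [hlt]
            rw [hzn, if_neg hk2]
            ring
      rw [Finset.sum_congr rfl (fun k _ => hterm k), Finset.sum_add_distrib,
        Finset.sum_ite_eq' Finset.univ]
      simp
    rw [t1, t2, tsum, hZ'0, t3, t4, t5, t6] at e2
    linarith
  -- same for eq. 3
  have step32 : ∀ j : ℕ, j + 1 ≤ m →
      IndAbove f12 (j+1) → IndAbove f22 (j+1) → IndAbove f32 (j+1) →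
      ∀ (z zt : ℝ) (Z : Fin (m+1) → ℝ) (hjm1 : j < m + 1), Pk f32 ⟨j, hjm1⟩ z zt Z = 0 := by
    intro j hj I12 I22 I32 z zt Z hjm1
    have hj1m : j + 1 < m + 1 := by omega
    set jF : Fin (m+1) := ⟨j, hjm1⟩ with hjF
    set j1F : Fin (m+1) := ⟨j+1, hj1m⟩ with hj1F
    have inv22 : ∀ z zt Z s, f22 z zt (Function.update Z j1F s) = f22 z zt Z :=
      fun a b Y s => I22 j1F (le_refl _) a b Y s
    have inv12 : ∀ z zt Z s, f12 z zt (Function.update Z j1F s) = f12 z zt Z :=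
      fun a b Y s => I12 j1F (le_refl _) a b Y s
    have inv32 : ∀ z zt Z s, f32 z zt (Function.update Z j1F s) = f32 z zt Z :=
      fun a b Y s => I32 j1F (le_refl _) a b Y s
    have inv11 : ∀ z zt Z s, f11 z zt (Function.update Z j1F s) = f11 z zt Z :=
      fun a b Y s => ind11 j1F (Nat.le_add_left 1 j) a b Y s
    have inv21 : ∀ z zt Z s, f21 z zt (Function.update Z j1F s) = f21 z zt Z :=
      fun a b Y s => ind21 j1F (Nat.le_add_left 1 j) a b Y s
    have inv31 : ∀ z zt Z s, f31 z zt (Function.update Z j1F s) = f31 z zt Z :=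
      fun a b Y s => ind31 j1F (Nat.le_add_left 1 j) a b Y s
    set Z' := Function.update Z j1F (Z j1F + 1) with hZ'
    have e1 := E3₀ z zt Z
    have e2 := E3₀ z zt Z'
    have hZ'0 : Z' 0 = Z 0 :=
      Function.update_of_ne (by rw [hj1F]; exact Fin.ne_of_val_ne (by simp)) _ _
    have t1 : Pz f32 z zt Z' = Pz f32 z zt Z := Pz_congr (fun a b => inv32 a b Z _) z zt
    have t2 : Pz f31 z zt Z' = Pz f31 z zt Z := Pz_congr (fun a b => inv31 a b Z _) z zt
    have t3 : f11 z zt Z' = f11 z zt Z := inv11 z zt Z _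
    have t4 : f22 z zt Z' = f22 z zt Z := inv22 z zt Z _
    have t5 : f12 z zt Z' = f12 z zt Z := inv12 z zt Z _
    have t6 : f21 z zt Z' = f21 z zt Z := inv21 z zt Z _
    have tsum : (∑ k, Pk f32 k z zt Z' * Znext Z' 0 k)
        = (∑ k, Pk f32 k z zt Z * Znext Z 0 k) + Pk f32 jF z zt Z := by
      have hterm : ∀ k : Fin (m+1), Pk f32 k z zt Z' * Znext Z' 0 k
          = Pk f32 k z zt Z * Znext Z 0 k + (if k = jF then Pk f32 k z zt Z else 0) := by
        intro k
        by_cases hk1 : k = j1F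
        · subst hk1
          rw [Pk_zero_of_inv inv32 z zt Z', Pk_zero_of_inv inv32 z zt Z]
          have hne : j1F ≠ jF := by rw [hjF, hj1F]; exact Fin.ne_of_val_ne (by simp)
          simp [hne]
        · rw [Pk_update_congr hk1 inv32 z zt Z _]
          by_cases hk2 : k = jF
          · subst hk2
            have hlt : (jF : ℕ) + 1 < m + 1 := hj1m
            have q1 : Znext Z' 0 jF = Z' ⟨(jF:ℕ)+1, hlt⟩ := dif_pos hlt
            have q2 : Znext Z 0 jF = Z ⟨(jF:ℕ)+1, hlt⟩ := dif_pos hlt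
            have q3 : Z' ⟨(jF:ℕ)+1, hlt⟩ = Z j1F + 1 := Function.update_self _ _ _
            have q4 : Z ⟨(jF:ℕ)+1, hlt⟩ = Z j1F := rfl
            rw [q1, q3, q2, q4, if_pos rfl]
            ring
          · have hkv : (k:ℕ) ≠ j := fun h => hk2 (by rw [hjF]; exact Fin.ext h)
            have hzn : Znext Z' 0 k = Znext Z 0 k := by
              unfold Znext
              by_cases hlt : (k:ℕ) + 1 < m + 1
              · simp only [dif_pos hlt]
                refine Function.update_of_ne ?_ _ _
                rw [hj1F]
                exact Fin.ne_of_val_ne (by simpa using hkv)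
              · simp [hlt]
            rw [hzn, if_neg hk2]
            ring
      rw [Finset.sum_congr rfl (fun k _ => hterm k), Finset.sum_add_distrib,
        Finset.sum_ite_eq' Finset.univ]
      simp
    rw [t1, t2, tsum, hZ'0, t3, t4, t5, t6] at e2
    linarith
  -- same for eq. 1 (here we need j ≥ 1)
  have step12 : ∀ j : ℕ, 1 ≤ j → j + 1 ≤ m →
      IndAbove f12 (j+1) → IndAbove f22 (j+1) → IndAbove f32 (j+1) →
      ∀ (z zt : ℝ) (Z : Fin (m+1) → ℝ) (hjm1 : j < m + 1), Pk f12 ⟨j, hjm1⟩ z zt Z = 0 := by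
    intro j hj1 hj I12 I22 I32 z zt Z hjm1
    have hj1m : j + 1 < m + 1 := by omega
    set jF : Fin (m+1) := ⟨j, hjm1⟩ with hjF
    set j1F : Fin (m+1) := ⟨j+1, hj1m⟩ with hj1F
    have inv22 : ∀ z zt Z s, f22 z zt (Function.update Z j1F s) = f22 z zt Z :=
      fun a b Y s => I22 j1F (le_refl _) a b Y s
    have inv12 : ∀ z zt Z s, f12 z zt (Function.update Z j1F s) = f12 z zt Z :=
      fun a b Y s => I12 j1F (le_refl _) a b Y s
    have inv32 : ∀ z zt Z s, f32 z zt (Function.update Z j1F s) = f32 z zt Z :=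
      fun a b Y s => I32 j1F (le_refl _) a b Y s
    have inv11 : ∀ z zt Z s, f11 z zt (Function.update Z j1F s) = f11 z zt Z :=
      fun a b Y s => ind11 j1F (Nat.le_add_left 1 j) a b Y s
    have inv21 : ∀ z zt Z s, f21 z zt (Function.update Z j1F s) = f21 z zt Z :=
      fun a b Y s => ind21 j1F (Nat.le_add_left 1 j) a b Y s
    have inv31 : ∀ z zt Z s, f31 z zt (Function.update Z j1F s) = f31 z zt Z :=
      fun a b Y s => ind31 j1F (Nat.le_add_left 1 j) a b Y s
    set Z' := Function.update Z j1F (Z j1F + 1) with hZ'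
    have e1 := E1₀ z zt Z
    have e2 := E1₀ z zt Z'
    have hZ'0 : Z' 0 = Z 0 :=
      Function.update_of_ne (by rw [hj1F]; exact Fin.ne_of_val_ne (by simp)) _ _
    have t1 : Pz f12 z zt Z' = Pz f12 z zt Z := Pz_congr (fun a b => inv12 a b Z _) z zt
    have t2 : Pz f11 z zt Z' = Pz f11 z zt Z := Pz_congr (fun a b => inv11 a b Z _) z zt
    have t7 : Pzt f11 z zt Z' = Pzt f11 z zt Z := Pzt_congr (fun a b => inv11 a b Z _) z zt
    have t3 : f31 z zt Z' = f31 z zt Z := inv31 z zt Z _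
    have t4 : f22 z zt Z' = f22 z zt Z := inv22 z zt Z _
    have t5 : f32 z zt Z' = f32 z zt Z := inv32 z zt Z _
    have t6 : f21 z zt Z' = f21 z zt Z := inv21 z zt Z _
    have tz : Znext Z' 0 0 = Znext Z 0 0 := by
      unfold Znext
      split
      · refine Function.update_of_ne ?_ _ _
        rw [hj1F]
        refine Fin.ne_of_val_ne ?_
        simp
        omega
      · rfl
    have tsum : (∑ k, Pk f12 k z zt Z' * Znext Z' 0 k)
        = (∑ k, Pk f12 k z zt Z * Znext Z 0 k) + Pk f12 jF z zt Z := by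
      have hterm : ∀ k : Fin (m+1), Pk f12 k z zt Z' * Znext Z' 0 k
          = Pk f12 k z zt Z * Znext Z 0 k + (if k = jF then Pk f12 k z zt Z else 0) := by
        intro k
        by_cases hk1 : k = j1F
        · subst hk1
          rw [Pk_zero_of_inv inv12 z zt Z', Pk_zero_of_inv inv12 z zt Z]
          have hne : j1F ≠ jF := by rw [hjF, hj1F]; exact Fin.ne_of_val_ne (by simp)
          simp [hne]
        · rw [Pk_update_congr hk1 inv12 z zt Z _]
          by_cases hk2 : k = jF
          · subst hk2
            have hlt : (jF : ℕ) + 1 < m + 1 := hj1m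
            have q1 : Znext Z' 0 jF = Z' ⟨(jF:ℕ)+1, hlt⟩ := dif_pos hlt
            have q2 : Znext Z 0 jF = Z ⟨(jF:ℕ)+1, hlt⟩ := dif_pos hlt
            have q3 : Z' ⟨(jF:ℕ)+1, hlt⟩ = Z j1F + 1 := Function.update_self _ _ _
            have q4 : Z ⟨(jF:ℕ)+1, hlt⟩ = Z j1F := rfl
            rw [q1, q3, q2, q4, if_pos rfl]
            ring
          · have hkv : (k:ℕ) ≠ j := fun h => hk2 (by rw [hjF]; exact Fin.ext h)
            have hzn : Znext Z' 0 k = Znext Z 0 k := by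
              unfold Znext
              by_cases hlt : (k:ℕ) + 1 < m + 1
              · simp only [dif_pos hlt]
                refine Function.update_of_ne ?_ _ _
                rw [hj1F]
                exact Fin.ne_of_val_ne (by simpa using hkv)
              · simp [hlt]
            rw [hzn, if_neg hk2]
            ring
      rw [Finset.sum_congr rfl (fun k _ => hterm k), Finset.sum_add_distrib,
        Finset.sum_ite_eq' Finset.univ]
      simp
    rw [t1, t2, t7, tsum, hZ'0, tz, t3, t4, t5, t6] at e2
    linarith
  -- downward induction: f12, f22, f32 are invariant under all coordinates ≥ 1
  have ind3 : ∀ d : ℕ, IndAbove f12 (max (m - d) 1) ∧ IndAbove f22 (max (m - d) 1)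
      ∧ IndAbove f32 (max (m - d) 1) := by
    intro d
    induction d with
    | zero =>
      have hbase : ∀ (g : ℝ → ℝ → (Fin (m+1) → ℝ) → ℝ),
          (ContDiff ℝ (⊤ : ℕ∞) fun p : ℝ × ℝ × (Fin (m + 1) → ℝ) => g p.1 p.2.1 p.2.2) →
          (1 ≤ m → ∀ z zt Z, Pk g (Fin.last m) z zt Z = 0) → IndAbove g (max (m - 0) 1) := by
        intro g hg hgl k hk
        have hk1 : m ≤ (k:ℕ) := le_trans (le_max_left _ _) hk
        have hk2 : 1 ≤ (k:ℕ) := le_trans (le_max_right _ _) hk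
        have hm1 : 1 ≤ m := by have := k.isLt; omega
        have hkm : (k:ℕ) = m := by have := k.isLt; omega
        have hkl : k = Fin.last m := Fin.ext (by simpa [Fin.last] using hkm)
        subst hkl
        exact indep_coord hg _ (hgl hm1)
      refine ⟨?_, hbase f22 hf22 (fun _ => C2a), hbase f32 hf32 (fun _ => C3a)⟩
      refine hbase f12 hf12 (fun hm1 z zt Z => ?_)
      rw [C1a]
      have h0l : (0 : Fin (m+1)) ≠ Fin.last m :=
        Fin.ne_of_val_ne (by simp [Fin.last]; omega)
      simp [h0l]
    | succ d IH =>
      obtain ⟨I12, I22, I32⟩ := IH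
      by_cases hcase : m - d ≤ 1
      · have heq : max (m - (d+1)) 1 = max (m - d) 1 := by
          rcases Nat.le_total (m - d) 1 with h | h
          · rw [Nat.max_eq_right h, Nat.max_eq_right (by omega)]
          · omega
        rw [heq]
        exact ⟨I12, I22, I32⟩
      · have hj1 : 1 ≤ m - (d+1) := by omega
        have hjm : (m - (d+1)) + 1 ≤ m := by omega
        have hmax1 : max (m - d) 1 = (m - (d+1)) + 1 := by
          rw [Nat.max_eq_left (by omega)]; omega
        have hmax2 : max (m - (d+1)) 1 = m - (d+1) := Nat.max_eq_left (by omega)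
        rw [hmax1] at I12 I22 I32
        rw [hmax2]
        have k12 := step12 (m - (d+1)) hj1 hjm I12 I22 I32
        have k22 := step22 (m - (d+1)) hjm I12 I22 I32
        have k32 := step32 (m - (d+1)) hjm I12 I22 I32
        refine ⟨?_, ?_, ?_⟩
        · intro k hk
          by_cases h : (k:ℕ) = m - (d+1)
          · have hkk : k = ⟨m - (d+1), by omega⟩ := Fin.ext h
            rw [hkk]
            exact indep_coord hf12 _ (fun z zt Z => k12 z zt Z _)
          · exact I12 k (by omega)
        · intro k hk
          by_cases h : (k:ℕ) = m - (d+1)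
          · have hkk : k = ⟨m - (d+1), by omega⟩ := Fin.ext h
            rw [hkk]
            exact indep_coord hf22 _ (fun z zt Z => k22 z zt Z _)
          · exact I22 k (by omega)
        · intro k hk
          by_cases h : (k:ℕ) = m - (d+1)
          · have hkk : k = ⟨m - (d+1), by omega⟩ := Fin.ext h
            rw [hkk]
            exact indep_coord hf32 _ (fun z zt Z => k32 z zt Z _)
          · exact I32 k (by omega)
  obtain ⟨I12, I22, I32⟩ := ind3 m
  have hmx : max (m - m) 1 = 1 := by
    rw [Nat.sub_self]; rfl
  rw [hmx] at I12 I22 I32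
  -- f22 and f32 do not depend on z_x either
  have P022 : ∀ z zt Z, Pk f22 0 z zt Z = 0 := by
    intro z zt Z
    rcases Nat.eq_zero_or_pos m with hm | hm
    · subst hm
      have h := C2a z zt Z
      have e : (0 : Fin 1) = Fin.last 0 := rfl
      rw [e]
      exact h
    · exact step22 0 hm I12 I22 I32 z zt Z (by omega)
  have P032 : ∀ z zt Z, Pk f32 0 z zt Z = 0 := by
    intro z zt Z
    rcases Nat.eq_zero_or_pos m with hm | hm
    · subst hm
      have h := C3a z zt Z
      have e : (0 : Fin 1) = Fin.last 0 := rfl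
      rw [e]
      exact h
    · exact step32 0 hm I12 I22 I32 z zt Z (by omega)
  have inv22_0 := indep_coord hf22 0 P022
  have inv32_0 := indep_coord hf32 0 P032
  have f22const : ∀ z zt Z, f22 z zt Z = f22 z zt 0 := by
    intro z zt Z
    calc f22 z zt Z = f22 z zt (Function.update (0 : Fin (m+1) → ℝ) 0 (Z 0)) :=
          eq_of_agree0 I22 z zt Z _ (by simp)
      _ = f22 z zt 0 := inv22_0 z zt 0 (Z 0)
  have f32const : ∀ z zt Z, f32 z zt Z = f32 z zt 0 := by
    intro z zt Z
    calc f32 z zt Z = f32 z zt (Function.update (0 : Fin (m+1) → ℝ) 0 (Z 0)) :=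
          eq_of_agree0 I32 z zt Z _ (by simp)
      _ = f32 z zt 0 := inv32_0 z zt 0 (Z 0)
  -- the common coefficient φ(z) = f22,zt = f21,zx  and  φ̃(z) = f32,zt = f31,zx
  have hP210 : ∀ z zt Z, Pk f21 0 z zt Z = Pk f21 0 z 0 Z := by
    intro z zt Z
    unfold Pk
    congr 1
    funext s
    exact h21zt z zt 0 _
  have hP310 : ∀ z zt Z, Pk f31 0 z zt Z = Pk f31 0 z 0 Z := by
    intro z zt Z
    unfold Pk
    congr 1
    funext s
    exact h31zt z zt 0 _
  have hphi1 : ∀ z zt Z, Pzt f22 z zt Z = Pk f21 0 z 0 0 := by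
    intro z zt Z
    calc Pzt f22 z zt Z = Pzt f22 z zt 0 := Pzt_congr (fun a b => f22const a b Z) z zt
      _ = Pk f21 0 z zt 0 := C2b z zt 0
      _ = Pk f21 0 z 0 0 := hP210 z zt 0
  have hphi2 : ∀ z zt Z, Pk f21 0 z zt Z = Pk f21 0 z 0 0 := by
    intro z zt Z
    rw [← C2b z zt Z]
    exact hphi1 z zt Z
  have hpsi1 : ∀ z zt Z, Pzt f32 z zt Z = Pk f31 0 z 0 0 := by
    intro z zt Z
    calc Pzt f32 z zt Z = Pzt f32 z zt 0 := Pzt_congr (fun a b => f32const a b Z) z zt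
      _ = Pk f31 0 z zt 0 := C3b z zt 0
      _ = Pk f31 0 z 0 0 := hP310 z zt 0
  have hpsi2 : ∀ z zt Z, Pk f31 0 z zt Z = Pk f31 0 z 0 0 := by
    intro z zt Z
    rw [← C3b z zt Z]
    exact hpsi1 z zt Z
  -- affine formulas
  have lin21 : ∀ z zt Z, f21 z zt Z = Pk f21 0 z 0 0 * Z 0 + f21 z 0 0 := by
    intro z zt Z
    have hderiv : ∀ s, deriv (fun s' => f21 z 0 (Function.update Z 0 s')) s
        = Pk f21 0 z 0 0 := by
      intro s
      rw [deriv_sect_k]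
      exact hphi2 z 0 _
    have haff := affine_of_deriv_const (sect_k_diff hf21 z 0 Z 0) hderiv
    have haff' : f21 z 0 (Function.update Z 0 (Z 0))
        = f21 z 0 (Function.update Z 0 0) + Pk f21 0 z 0 0 * Z 0 := haff (Z 0)
    have h1 : f21 z zt Z = f21 z 0 Z := h21zt z zt 0 Z
    have h2 : f21 z 0 Z = f21 z 0 (Function.update Z 0 (Z 0)) := by
      rw [Function.update_eq_self]
    have h3 : f21 z 0 (Function.update Z 0 0) = f21 z 0 0 :=
      eq_of_agree0 ind21 z 0 _ _ (by simp)
    rw [h1, h2, haff', h3]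
    ring
  have lin31 : ∀ z zt Z, f31 z zt Z = Pk f31 0 z 0 0 * Z 0 + f31 z 0 0 := by
    intro z zt Z
    have hderiv : ∀ s, deriv (fun s' => f31 z 0 (Function.update Z 0 s')) s
        = Pk f31 0 z 0 0 := by
      intro s
      rw [deriv_sect_k]
      exact hpsi2 z 0 _
    have haff := affine_of_deriv_const (sect_k_diff hf31 z 0 Z 0) hderiv
    have haff' : f31 z 0 (Function.update Z 0 (Z 0))
        = f31 z 0 (Function.update Z 0 0) + Pk f31 0 z 0 0 * Z 0 := haff (Z 0)
    have h1 : f31 z zt Z = f31 z 0 Z := h31zt z zt 0 Z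
    have h2 : f31 z 0 Z = f31 z 0 (Function.update Z 0 (Z 0)) := by
      rw [Function.update_eq_self]
    have h3 : f31 z 0 (Function.update Z 0 0) = f31 z 0 0 :=
      eq_of_agree0 ind31 z 0 _ _ (by simp)
    rw [h1, h2, haff', h3]
    ring
  have lin22 : ∀ z zt Z, f22 z zt Z = Pk f21 0 z 0 0 * zt + f22 z 0 0 := by
    intro z zt Z
    have hderiv : ∀ s, deriv (fun s' => f22 z s' Z) s = Pk f21 0 z 0 0 :=
      fun s => hphi1 z s Z
    have haff := affine_of_deriv_const (sect_zt_diff hf22 z Z) hderiv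
    have haff' : f22 z zt Z = f22 z 0 Z + Pk f21 0 z 0 0 * zt := haff zt
    rw [haff', f22const z 0 Z]
    ring
  have lin32 : ∀ z zt Z, f32 z zt Z = Pk f31 0 z 0 0 * zt + f32 z 0 0 := by
    intro z zt Z
    have hderiv : ∀ s, deriv (fun s' => f32 z s' Z) s = Pk f31 0 z 0 0 :=
      fun s => hpsi1 z s Z
    have haff := affine_of_deriv_const (sect_zt_diff hf32 z Z) hderiv
    have haff' : f32 z zt Z = f32 z 0 Z + Pk f31 0 z 0 0 * zt := haff zt
    rw [haff', f32const z 0 Z]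
    ring
  -- differentiability of the coefficient functions
  have dψ21 : Differentiable ℝ (fun z => f21 z 0 (0 : Fin (m+1) → ℝ)) :=
    (hf21.differentiable (by simp)).comp
      (differentiable_id.prodMk ((differentiable_const (0:ℝ)).prodMk
        (differentiable_const (0 : Fin (m+1) → ℝ))))
  have dψ22 : Differentiable ℝ (fun z => f22 z 0 (0 : Fin (m+1) → ℝ)) :=
    (hf22.differentiable (by simp)).comp
      (differentiable_id.prodMk ((differentiable_const (0:ℝ)).prodMk
        (differentiable_const (0 : Fin (m+1) → ℝ))))
  have dψ31 : Differentiable ℝ (fun z => f31 z 0 (0 : Fin (m+1) → ℝ)) :=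
    (hf31.differentiable (by simp)).comp
      (differentiable_id.prodMk ((differentiable_const (0:ℝ)).prodMk
        (differentiable_const (0 : Fin (m+1) → ℝ))))
  have dψ32 : Differentiable ℝ (fun z => f32 z 0 (0 : Fin (m+1) → ℝ)) :=
    (hf32.differentiable (by simp)).comp
      (differentiable_id.prodMk ((differentiable_const (0:ℝ)).prodMk
        (differentiable_const (0 : Fin (m+1) → ℝ))))
  have dφ : Differentiable ℝ (fun z => Pk f21 0 z 0 0) := by
    have he : (fun z => Pk f21 0 z 0 0)
        = fun z => f21 z 0 (Function.update (0 : Fin (m+1) → ℝ) 0 1)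
            - f21 z 0 (0 : Fin (m+1) → ℝ) := by
      funext z
      rw [lin21 z 0 (Function.update (0 : Fin (m+1) → ℝ) 0 1)]
      simp
    rw [he]
    exact ((hf21.differentiable (by simp)).comp
      (differentiable_id.prodMk ((differentiable_const (0:ℝ)).prodMk
        (differentiable_const (Function.update (0 : Fin (m+1) → ℝ) 0 1))))).sub dψ21
  have dφt : Differentiable ℝ (fun z => Pk f31 0 z 0 0) := by
    have he : (fun z => Pk f31 0 z 0 0)
        = fun z => f31 z 0 (Function.update (0 : Fin (m+1) → ℝ) 0 1)
            - f31 z 0 (0 : Fin (m+1) → ℝ) := by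
      funext z
      rw [lin31 z 0 (Function.update (0 : Fin (m+1) → ℝ) 0 1)]
      simp
    rw [he]
    exact ((hf31.differentiable (by simp)).comp
      (differentiable_id.prodMk ((differentiable_const (0:ℝ)).prodMk
        (differentiable_const (Function.update (0 : Fin (m+1) → ℝ) 0 1))))).sub dψ31
  -- assemble the conclusion
  refine ⟨⟨⟨fun z a zt => f11 z zt (Function.update (0 : Fin (m+1) → ℝ) 0 a),
      fun z zt Z => eq_of_agree0 ind11 z zt Z _ (by simp)⟩,
    ⟨fun z a zt => f12 z zt (Function.update (0 : Fin (m+1) → ℝ) 0 a),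
      fun z zt Z => eq_of_agree0 I12 z zt Z _ (by simp)⟩,
    ⟨fun z a zt => f21 z zt (Function.update (0 : Fin (m+1) → ℝ) 0 a),
      fun z zt Z => eq_of_agree0 ind21 z zt Z _ (by simp)⟩,
    ⟨fun z a zt => f22 z zt (Function.update (0 : Fin (m+1) → ℝ) 0 a),
      fun z zt Z => eq_of_agree0 I22 z zt Z _ (by simp)⟩,
    ⟨fun z a zt => f31 z zt (Function.update (0 : Fin (m+1) → ℝ) 0 a),
      fun z zt Z => eq_of_agree0 ind31 z zt Z _ (by simp)⟩,
    ⟨fun z a zt => f32 z zt (Function.update (0 : Fin (m+1) → ℝ) 0 a),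
      fun z zt Z => eq_of_agree0 I32 z zt Z _ (by simp)⟩⟩,
    part2,
    (fun z => Pk f21 0 z 0 0), (fun z => Pk f31 0 z 0 0),
    (fun z => f21 z 0 0), (fun z => f22 z 0 0), (fun z => f31 z 0 0), (fun z => f32 z 0 0),
    dφ, dφt, dψ21, dψ22, dψ31, dψ32,
    fun z zt Z => ⟨lin21 z zt Z, lin22 z zt Z, lin31 z zt Z, lin32 z zt Z⟩⟩
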